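/- For the vector field X associated to the system u̇ = -v + h, v̇ = u + h, ẇ = -w + h with h(u,v,w) = a₁u² - a₁v² - 2a₁w² + 6a₁uv - 4a₁uw, the polynomial F(u,v,w) = w + a₁(u-v)² - 2a₁(v-w)² satisfies XF = -F, i.e., F = 0 is an invariant algebraic surface with cofactor K = -1. -/

import Mathlib

/-!
The partial derivatives of `F` are affine and sum to `1`, so `XF` is `h` plus the derivative
of `F` along the linear part `-v ∂u + u ∂v - w ∂w`; for the given coefficients of `h` this
quadratic expression is exactly `-F`.
-/

noncomputable def h1 (a₁ u v w : ℝ) : ℝ :=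
  a₁*u^2 - a₁*v^2 - 2*a₁*w^2 + 6*a₁*u*v - 4*a₁*u*w

noncomputable def F1 (a₁ u v w : ℝ) : ℝ :=
  w + a₁*(u - v)^2 - 2*a₁*(v - w)^2

section PartialDerivatives

variable (a₁ u v w : ℝ)

theorem hasDerivAt_F1_fst : HasDerivAt (fun s => F1 a₁ s v w) (2*a₁*(u - v)) u := by
  have := ((((hasDerivAt_id' u).sub_const v).pow 2).const_mul a₁).const_add w
    |>.sub_const (2*a₁*(v - w)^2)
  exact this.congr_deriv (by ring)

theorem hasDerivAt_F1_snd :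
    HasDerivAt (fun s => F1 a₁ u s w) (-2*a₁*(u - v) - 4*a₁*(v - w)) v := by
  have := ((((hasDerivAt_id' v).const_sub u).pow 2).const_mul a₁).const_add w
    |>.sub ((((hasDerivAt_id' v).sub_const w).pow 2).const_mul (2*a₁))
  exact this.congr_deriv (by ring)

theorem hasDerivAt_F1_thd : HasDerivAt (fun s => F1 a₁ u v s) (1 + 4*a₁*(v - w)) w := by
  have := ((hasDerivAt_id' w).add_const (a₁*(u - v)^2)).sub
    ((((hasDerivAt_id' w).const_sub v).pow 2).const_mul (2*a₁))
  exact this.congr_deriv (by ring)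

end PartialDerivatives

/-- F = 0 is an invariant algebraic surface with cofactor K = -1. -/
theorem stmt_1 : ∀ a₁ u v w : ℝ,
    (-v + h1 a₁ u v w) * deriv (fun s => F1 a₁ s v w) u
    + (u + h1 a₁ u v w) * deriv (fun s => F1 a₁ u s w) v
    + (-w + h1 a₁ u v w) * deriv (fun s => F1 a₁ u v s) w
    = -F1 a₁ u v w := by
  intro a₁ u v w
  rw [(hasDerivAt_F1_fst a₁ u v w).deriv, (hasDerivAt_F1_snd a₁ u v w).deriv,
    (hasDerivAt_F1_thd a₁ u v w).deriv]
  unfold F1 h1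
  ring
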